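/- arXiv:1703.04367 — 2 statements merged into one kernel-verified Lean document; each statement's English description precedes it below -/
import Mathlib

section
/- Every population protocol satisfying LayeredTermination and StrongConsensus is silent and well-specified. -/
/-! Formalization of population protocols (Angluin et al.), following
"Towards Efficient Verification of Population Protocols". -/

namespace PopProt

/-- A transition `(p, q) ↦ (p', q')`. -/
abbrev PTrans (Q : Type*) := Q × Q × Q × Q

variable {Q : Type*} [Fintype Q] [DecidableEq Q]

/-- `pre t` is the multiset of the two states consumed by transition `t`. -/
def pre (t : PTrans Q) : Multiset Q := {t.1, t.2.1}

/-- `post t` is the multiset of the two states produced by transition `t`. -/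
def post (t : PTrans Q) : Multiset Q := {t.2.2.1, t.2.2.2}

/-- A transition is silent if it cannot change the current configuration. -/
def SilentT (t : PTrans Q) : Prop := pre t = post t

instance : DecidablePred (SilentT (Q := Q)) := fun t => by
  unfold SilentT; infer_instance

/-- Transitions of the form `(p, q) ↦ (p, q)`. -/
def IsSilentPair (t : PTrans Q) : Prop := ∃ p q : Q, t = (p, q, p, q)

instance : DecidablePred (IsSilentPair (Q := Q)) := fun t => by
  unfold IsSilentPair; infer_instance

/-- A population protocol with states `Q` and input alphabet `A`.
Configurations are multisets over `Q` of cardinality at least 2. -/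
structure Protocol (Q A : Type*) [Fintype Q] [DecidableEq Q] [Fintype A] where
  T : Finset (PTrans Q)
  total : ∀ p q : Q, ∃ p' q' : Q, (p, q, p', q') ∈ T
  inp : A → Q
  out : Q → Bool

/-- `C →t C'`. -/
def StepBy (t : PTrans Q) (C C' : Multiset Q) : Prop :=
  pre t ≤ C ∧ C' = C - pre t + post t

/-- One step of the protocol with transition set `T`. -/
def Step (T : Finset (PTrans Q)) (C C' : Multiset Q) : Prop :=
  ∃ t ∈ T, StepBy t C C'

/-- Reachability `C →* C'`. -/
def Reach (T : Finset (PTrans Q)) : Multiset Q → Multiset Q → Prop :=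
  Relation.ReflTransGen (Step T)

/-- `C →w C'` for a finite sequence `w` of transitions. -/
def SeqStep (T : Finset (PTrans Q)) : List (PTrans Q) → Multiset Q → Multiset Q → Prop
  | [], C, C' => C' = C
  | t :: w, C, C' => t ∈ T ∧ ∃ D, StepBy t C D ∧ SeqStep T w D C'

/-- An execution: an infinite sequence of configurations related by steps. -/
def IsExec (T : Finset (PTrans Q)) (e : ℕ → Multiset Q) : Prop :=
  2 ≤ Multiset.card (e 0) ∧ ∀ i, Step T (e i) (e (i + 1))

/-- Fairness: if a step `C → C'` is possible and `C` occurs infinitely often,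
then the step is taken infinitely often. -/
def Fair (T : Finset (PTrans Q)) (e : ℕ → Multiset Q) : Prop :=
  ∀ C C' : Multiset Q, Step T C C' →
    {i | e i = C}.Infinite → {j | e j = C ∧ e (j + 1) = C'}.Infinite

/-- An execution is silent if it is eventually constant. -/
def SilentExec (e : ℕ → Multiset Q) : Prop := ∃ n : ℕ, ∀ i ≥ n, e i = e n

/-- A configuration is terminal if every transition enabled at it is silent. -/
def Terminal (T : Finset (PTrans Q)) (C : Multiset Q) : Prop :=
  ∀ t ∈ T, pre t ≤ C → SilentT t

/-- `C` is a consensus configuration with output `b`. -/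
def Consensus (out : Q → Bool) (C : Multiset Q) (b : Bool) : Prop :=
  ∀ q ∈ C, out q = b

/-- An execution stabilizes to `b`. -/
def Stabilizes (out : Q → Bool) (e : ℕ → Multiset Q) (b : Bool) : Prop :=
  ∃ n : ℕ, ∀ i ≥ n, Consensus out (e i) b

variable {A : Type*} [Fintype A]

/-- The initial configuration determined by input `X`. -/
def init (P : Protocol Q A) (X : Multiset A) : Multiset Q := X.map P.inp

/-- A protocol is silent if every fair execution from every configuration is silent. -/
def IsSilentProtocol (P : Protocol Q A) : Prop :=
  ∀ e : ℕ → Multiset Q, IsExec P.T e → Fair P.T e → SilentExec e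

/-- A protocol is well-specified if for every input every fair execution from the
corresponding initial configuration stabilizes to a common boolean value. -/
def WellSpecified (P : Protocol Q A) : Prop :=
  ∀ X : Multiset A, 2 ≤ Multiset.card X → ∃ b : Bool,
    ∀ e : ℕ → Multiset Q, e 0 = init P X → (∀ i, Step P.T (e i) (e (i + 1))) →
      Fair P.T e → Stabilizes P.out e b

/-- A protocol computes the predicate `φ`. -/
def Computes (P : Protocol Q A) (φ : Multiset A → Bool) : Prop :=
  ∀ X : Multiset A, 2 ≤ Multiset.card X →
    ∀ e : ℕ → Multiset Q, e 0 = init P X → (∀ i, Step P.T (e i) (e (i + 1))) →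
      Fair P.T e → Stabilizes P.out e (φ X)

/-- Termination: from every configuration some terminal configuration is reachable. -/
def Termination (P : Protocol Q A) : Prop :=
  ∀ C : Multiset Q, 2 ≤ Multiset.card C →
    ∃ C' : Multiset Q, Reach P.T C C' ∧ Terminal P.T C'

/-- NoSplitTerminal: all terminal configurations reachable from an initial configuration
are consensus configurations with one common output. -/
def NoSplitTerminal (P : Protocol Q A) : Prop :=
  ∀ X : Multiset A, 2 ≤ Multiset.card X → ∃ b : Bool,
    ∀ C' : Multiset Q, Reach P.T (init P X) C' → Terminal P.T C' →
      Consensus P.out C' b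

/-- All transitions of the form `(p, q) ↦ (p, q)`. -/
def silents (Q : Type*) [Fintype Q] [DecidableEq Q] : Finset (PTrans Q) :=
  Finset.univ.image fun pq : Q × Q => (pq.1, pq.2, pq.1, pq.2)

/-- The transition set of the induced protocol `P[S]`. -/
def induced (S : Finset (PTrans Q)) : Finset (PTrans Q) := S ∪ silents Q

/-- `(Ts 0, …, Ts (n-1))` is an ordered partition witnessing LayeredTermination. -/
def LayeredWitness (P : Protocol Q A) (n : ℕ) (Ts : Fin n → Finset (PTrans Q)) : Prop :=
  (∀ i, (Ts i).Nonempty) ∧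
  (∀ i j, i ≠ j → Disjoint (Ts i) (Ts j)) ∧
  Finset.univ.biUnion Ts = P.T ∧
  ∀ i : Fin n,
    (∀ e : ℕ → Multiset Q, IsExec (induced (Ts i)) e → SilentExec e) ∧
    (∀ C C' : Multiset Q, 2 ≤ Multiset.card C →
      Reach (induced (Ts i)) C C' →
      Terminal (induced ((Finset.univ.filter fun j => j < i).biUnion Ts)) C →
      Terminal (induced ((Finset.univ.filter fun j => j < i).biUnion Ts)) C')

/-- LayeredTermination. -/
def LayeredTermination (P : Protocol Q A) : Prop :=
  ∃ (n : ℕ) (Ts : Fin n → Finset (PTrans Q)), LayeredWitness P n Ts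

/-- `•R`, relative to the transition set `T`. -/
def preSetOf (T : Finset (PTrans Q)) (R : Finset Q) : Finset (PTrans Q) :=
  T.filter fun t => ∃ q ∈ R, q ∈ post t

/-- `R•`, relative to the transition set `T`. -/
def postSetOf (T : Finset (PTrans Q)) (R : Finset Q) : Finset (PTrans Q) :=
  T.filter fun t => ∃ q ∈ R, q ∈ pre t

/-- `R` is a `U`-trap: `R• ∩ U ⊆ •R`. -/
def IsTrap (T U : Finset (PTrans Q)) (R : Finset Q) : Prop :=
  postSetOf T R ∩ U ⊆ preSetOf T R

/-- `R` is a `U`-siphon: `•R ∩ U ⊆ R•`. -/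
def IsSiphon (T U : Finset (PTrans Q)) (R : Finset Q) : Prop :=
  preSetOf T R ∩ U ⊆ postSetOf T R

/-- The flow equations for `(C, C', x)`. -/
def FlowEq (T : Finset (PTrans Q)) (C C' : Multiset Q) (x : PTrans Q → ℕ) : Prop :=
  ∀ q : Q, (C'.count q : ℤ) =
    (C.count q : ℤ) + ∑ t ∈ T, (x t : ℤ) * (((post t).count q : ℤ) - ((pre t).count q : ℤ))

/-- The support of `x` within `T`. -/
def suppIn (T : Finset (PTrans Q)) (x : PTrans Q → ℕ) : Finset (PTrans Q) :=
  T.filter fun t => x t ≠ 0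

/-- Potential reachability `C ⇒ₓ C'` (flow equations plus trap and siphon constraints,
with `U = supp x`). -/
def PotReach (T : Finset (PTrans Q)) (C C' : Multiset Q) (x : PTrans Q → ℕ) : Prop :=
  FlowEq T C C' x ∧
  (∀ R : Finset Q, IsTrap T (suppIn T x) R → (∀ q ∈ R, q ∉ C') →
    preSetOf T R ∩ suppIn T x = ∅) ∧
  (∀ R : Finset Q, IsSiphon T (suppIn T x) R → (∀ q ∈ R, q ∉ C) →
    postSetOf T R ∩ suppIn T x = ∅)

/-- StrongConsensus: all terminal configurations potentially reachable from an initial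
configuration are consensus configurations with one common output. -/
def StrongConsensus (P : Protocol Q A) : Prop :=
  ∀ X : Multiset A, 2 ≤ Multiset.card X → ∃ b : Bool,
    ∀ (C' : Multiset Q) (x : PTrans Q → ℕ),
      PotReach P.T (init P X) C' x → Terminal P.T C' → Consensus P.out C' b

/-- `C` is `U`-dead: no transition of `U` can change `C`. -/
def UDeadConf (U : Finset (PTrans Q)) (C : Multiset Q) : Prop :=
  ∀ t ∈ U, ∀ C' : Multiset Q, StepBy t C C' → C' = C

/-- The protocol with transitions `T` is `U`-dead: from every `U`-dead configuration,
every reachable configuration is `U`-dead. -/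
def UDead (T U : Finset (PTrans Q)) : Prop :=
  ∀ C₀ : Multiset Q, 2 ≤ Multiset.card C₀ → UDeadConf U C₀ →
    ∀ C : Multiset Q, Reach T C₀ C → UDeadConf U C

end PopProt

/-!
Layered termination gives termination: starting anywhere, run the first layer until it is
silent, then the second, and so on; each layer keeps the layers below it dead, so a terminal
configuration is reached. In a fair execution some configuration recurs infinitely often, since
there are only finitely many configurations of a given size; fairness then forces a visit to a
terminal configuration reachable from it, after which the execution is constant. Finally, actual
reachability implies potential reachability: the Parikh vector of a firing sequence satisfies the
flow equations, a marked trap stays marked and an unmarked siphon stays unmarked. Hence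
StrongConsensus fixes the output of the terminal configuration every fair execution settles in.
-/

namespace PopProt

open Multiset (card)

variable {Q : Type*} [DecidableEq Q]

section Steps

variable {T S : Finset (PTrans Q)} {t : PTrans Q} {C C' D : Multiset Q}

lemma StepBy.count_add_count_pre (h : StepBy t C C') (q : Q) :
    C'.count q + (pre t).count q = C.count q + (post t).count q := by
  obtain ⟨hle, rfl⟩ := h
  have := Multiset.count_le_of_le q hle
  rw [Multiset.count_add, Multiset.count_sub]
  omega

lemma StepBy.card_eq (h : StepBy t C C') : card C' = card C := by
  obtain ⟨hle, rfl⟩ := h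
  have := Multiset.card_le_card hle
  have hpre_post : card (pre t) = card (post t) := rfl
  rw [Multiset.card_add, Multiset.card_sub hle]
  omega

lemma StepBy.eq_of_silentT (h : StepBy t C C') (hs : SilentT t) : C' = C := by
  obtain ⟨hle, rfl⟩ := h
  rw [← hs, tsub_add_cancel_of_le hle]

lemma StepBy.ne_of_not_silentT (h : StepBy t C C') (hs : ¬ SilentT t) : C' ≠ C := by
  rintro rfl
  exact hs (Multiset.ext.mpr fun q => by have := h.count_add_count_pre q; omega)

lemma StepBy.mem_of_mem_post {q : Q} (h : StepBy t C C') (hq : q ∈ post t) : q ∈ C' :=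
  h.2 ▸ Multiset.mem_add.mpr (Or.inr hq)

lemma StepBy.mem_of_mem_of_notMem_pre {q : Q} (h : StepBy t C C') (hq : q ∈ C)
    (hq' : q ∉ pre t) : q ∈ C' := by
  rw [h.2, Multiset.mem_add, Multiset.mem_sub, Multiset.count_eq_zero.mpr hq']
  exact Or.inl (Multiset.count_pos.mpr hq)

lemma StepBy.mem_or_mem_post {q : Q} (h : StepBy t C C') (hq : q ∈ C') :
    q ∈ C ∨ q ∈ post t := by
  rw [h.2, Multiset.mem_add] at hq
  exact hq.imp_left (Multiset.mem_of_le (Multiset.sub_le_self _ _))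

lemma SilentT.of_mem_silents [Fintype Q] (h : t ∈ silents Q) : SilentT t := by
  obtain ⟨pq, -, rfl⟩ := Finset.mem_image.mp h
  rfl

lemma terminal_induced_iff [Fintype Q] : Terminal (induced S) C ↔ Terminal S C :=
  ⟨fun h t ht => h t (Finset.mem_union_left _ ht), fun h t ht hpre =>
    (Finset.mem_union.mp ht).elim (h t · hpre) SilentT.of_mem_silents⟩

lemma terminal_union_iff : Terminal (S ∪ T) C ↔ Terminal S C ∧ Terminal T C := by
  simp only [Terminal, Finset.mem_union, or_imp, forall_and]

lemma Terminal.eq_of_step (hC : Terminal T C) (h : Step T C C') : C' = C := by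
  obtain ⟨t, ht, hstep⟩ := h
  exact hstep.eq_of_silentT (hC t ht hstep.1)

lemma Reach.card_eq (h : Reach T C C') : card C' = card C := by
  induction h with
  | refl => rfl
  | tail _ hstep ih =>
    obtain ⟨t, -, hstep⟩ := hstep
    rw [hstep.card_eq, ih]

lemma Reach.of_induced [Fintype Q] (hST : S ⊆ T) (h : Reach (induced S) C C') : Reach T C C' := by
  induction h with
  | refl => exact .refl
  | tail _ hstep ih =>
    obtain ⟨t, ht, hstep⟩ := hstep
    rcases Finset.mem_union.mp ht with htS | hsilent
    · exact ih.tail ⟨t, hST htS, hstep⟩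
    · rwa [hstep.eq_of_silentT (SilentT.of_mem_silents hsilent)]

end Steps

section Termination

lemma exists_reach_terminal_of_silentExec {S : Finset (PTrans Q)}
    (hS : ∀ e, IsExec S e → SilentExec e) {C : Multiset Q} (hC : 2 ≤ card C) :
    ∃ D, Reach S C D ∧ Terminal S D := by
  by_contra! h
  -- otherwise non-silent transitions can be fired forever, giving a non-silent execution
  have hnext : ∀ D : {D // Reach S C D},
      ∃ D' : {D // Reach S C D}, Step S D D' ∧ D'.1 ≠ D.1 := by
    rintro ⟨D, hD⟩
    obtain ⟨t, ht, hpre, hns⟩ : ∃ t ∈ S, pre t ≤ D ∧ ¬ SilentT t := by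
      simpa [Terminal] using h D hD
    have hstep : Step S D (D - pre t + post t) := ⟨t, ht, hpre, rfl⟩
    exact ⟨⟨_, hD.tail hstep⟩, hstep, StepBy.ne_of_not_silentT ⟨hpre, rfl⟩ hns⟩
  choose f hf using hnext
  let e k := (f^[k] ⟨C, .refl⟩).1
  have he : ∀ k, e (k + 1) = (f (f^[k] ⟨C, .refl⟩)).1 := fun k => by
    simp only [e, Function.iterate_succ_apply']
  obtain ⟨n, hn⟩ := hS e ⟨hC, fun k => he k ▸ (hf _).1⟩
  exact (hf _).2 ((he n).symm.trans (hn (n + 1) n.le_succ))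

def layersBelow {n : ℕ} (Ts : Fin n → Finset (PTrans Q)) (k : ℕ) : Finset (PTrans Q) :=
  (Finset.univ.filter fun j : Fin n => (j : ℕ) < k).biUnion Ts

section
variable {n : ℕ} (Ts : Fin n → Finset (PTrans Q))

lemma layersBelow_zero : layersBelow Ts 0 = ∅ := by
  simp [layersBelow]

lemma layersBelow_succ {k : ℕ} (hk : k < n) :
    layersBelow Ts (k + 1) = layersBelow Ts k ∪ Ts ⟨k, hk⟩ := by
  ext t
  simp only [layersBelow, Finset.mem_union, Finset.mem_biUnion, Finset.mem_filter,
    Finset.mem_univ, true_and, Nat.lt_succ_iff_lt_or_eq, or_and_right, exists_or]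
  refine or_congr_right ⟨?_, fun ht => ⟨⟨k, hk⟩, rfl, ht⟩⟩
  rintro ⟨j, rfl, ht⟩
  exact ht

lemma layersBelow_self : layersBelow Ts n = Finset.univ.biUnion Ts := by
  simp [layersBelow]

end

theorem LayeredTermination.termination [Fintype Q] {A : Type*} [Fintype A] {P : Protocol Q A}
    (hP : LayeredTermination P) : Termination P := by
  obtain ⟨n, Ts, -, -, hunion, hlayer⟩ := hP
  intro C hC
  have hlower : ∀ k ≤ n, ∃ D, Reach P.T C D ∧ Terminal (layersBelow Ts k) D := by
    intro k
    induction k with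
    | zero => exact fun _ => ⟨C, .refl, by simp [layersBelow_zero, Terminal]⟩
    | succ k ih =>
      intro hkn
      obtain ⟨D, hCD, hD⟩ := ih (by omega)
      have hcard : 2 ≤ card D := hCD.card_eq ▸ hC
      obtain ⟨hsilent, hkeep⟩ := hlayer ⟨k, hkn⟩
      obtain ⟨E, hDE, hE⟩ := exists_reach_terminal_of_silentExec hsilent hcard
      -- the lower layers of `LayeredWitness` at `⟨k, hkn⟩` are `layersBelow Ts k` by `rfl`
      have hE' := hkeep D E hcard hDE (terminal_induced_iff.mpr hD)
      refine ⟨E, hCD.trans (hDE.of_induced ?_), ?_⟩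
      · rw [← hunion]
        exact Finset.subset_biUnion_of_mem Ts (Finset.mem_univ _)
      · rw [layersBelow_succ Ts hkn, terminal_union_iff]
        exact ⟨terminal_induced_iff.mp hE', terminal_induced_iff.mp hE⟩
  obtain ⟨D, hCD, hD⟩ := hlower n le_rfl
  exact ⟨D, hCD, by rwa [layersBelow_self, hunion] at hD⟩

end Termination

section Fairness

variable {T : Finset (PTrans Q)} {e : ℕ → Multiset Q}

lemma reach_of_steps (hstep : ∀ i, Step T (e i) (e (i + 1))) (i : ℕ) : Reach T (e 0) (e i) := by
  induction i with
  | zero => exact .refl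
  | succ i ih => exact ih.tail (hstep i)

lemma exists_infinite_visits [Fintype Q] (hstep : ∀ i, Step T (e i) (e (i + 1))) :
    ∃ C, {i | e i = C}.Infinite := by
  let f : ℕ → Sym Q (card (e 0)) := fun i => ⟨e i, (reach_of_steps hstep i).card_eq⟩
  obtain ⟨C, hC⟩ := Finite.exists_infinite_fiber f
  refine ⟨C.1, (Set.infinite_coe_iff.mp hC).mono fun i hi => ?_⟩
  exact congrArg Subtype.val (hi : f i = C)

lemma Fair.infinite_visits_of_reach (hf : Fair T e) {C D : Multiset Q}
    (hC : {i | e i = C}.Infinite) (hCD : Reach T C D) : {i | e i = D}.Infinite := by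
  induction hCD with
  | refl => exact hC
  | @tail B D _ hstep ih =>
    refine ((hf B D hstep ih).image Nat.succ_injective.injOn).mono ?_
    rintro _ ⟨j, ⟨-, hj⟩, rfl⟩
    exact hj

lemma Terminal.eq_of_steps {n : ℕ} (hstep : ∀ i, Step T (e i) (e (i + 1)))
    (hn : Terminal T (e n)) : ∀ i ≥ n, e i = e n := by
  intro i hi
  induction i, hi using Nat.le_induction with
  | base => rfl
  | succ i _ ih => exact hn.eq_of_step (ih ▸ hstep i)

theorem Fair.exists_terminal_forever [Fintype Q] {A : Type*} [Fintype A] {P : Protocol Q A}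
    (hP : Termination P) {e : ℕ → Multiset Q} (he : 2 ≤ card (e 0))
    (hstep : ∀ i, Step P.T (e i) (e (i + 1))) (hf : Fair P.T e) :
    ∃ n, Terminal P.T (e n) ∧ ∀ i ≥ n, e i = e n := by
  obtain ⟨C, hC⟩ := exists_infinite_visits hstep
  obtain ⟨i, rfl : e i = C⟩ := hC.nonempty
  obtain ⟨D, hCD, hD⟩ := hP (e i) ((reach_of_steps hstep i).card_eq ▸ he)
  obtain ⟨n, rfl : e n = D⟩ := (hf.infinite_visits_of_reach hC hCD).nonempty
  exact ⟨n, hD, hD.eq_of_steps hstep⟩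

end Fairness

section PotentialReachability

variable {T : Finset (PTrans Q)} {R : Finset Q} {w : List (PTrans Q)} {C C' : Multiset Q}

lemma Reach.exists_seqStep (h : Reach T C C') : ∃ w, SeqStep T w C C' := by
  induction h using Relation.ReflTransGen.head_induction_on with
  | refl => exact ⟨[], rfl⟩
  | head hstep _ ih =>
    obtain ⟨w, hw⟩ := ih
    obtain ⟨t, ht, hstep⟩ := hstep
    exact ⟨t :: w, ht, _, hstep, hw⟩

lemma SeqStep.mem (h : SeqStep T w C C') : ∀ t ∈ w, t ∈ T := by
  induction w generalizing C with
  | nil => simp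
  | cons t w ih =>
    obtain ⟨ht, D, -, hw⟩ := h
    exact List.forall_mem_cons.mpr ⟨ht, ih hw⟩

lemma SeqStep.flowEq (h : SeqStep T w C C') : FlowEq T C C' (fun t => w.count t) := by
  induction w generalizing C with
  | nil =>
    obtain rfl : C' = C := h
    simp [FlowEq]
  | cons t w ih =>
    obtain ⟨ht, D, hD, hw⟩ := h
    intro q
    have hcount : ∀ u, ((t :: w).count u : ℤ) = w.count u + if u = t then 1 else 0 := by
      intro u
      rcases eq_or_ne u t with rfl | hu
      · simp [List.count_cons_self]
      · simp [List.count_cons_of_ne hu.symm, hu]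
    have hstep := hD.count_add_count_pre q
    simp only [hcount, add_mul, Finset.sum_add_distrib, ite_mul, one_mul, zero_mul,
      Finset.sum_ite_eq', if_pos ht, ih hw q]
    linarith

lemma SeqStep.exists_mem_of_trap (h : SeqStep T w C C')
    (htrap : ∀ u ∈ w, (∃ q ∈ R, q ∈ pre u) → ∃ q ∈ R, q ∈ post u)
    (hC : ∃ q ∈ R, q ∈ C) : ∃ q ∈ R, q ∈ C' := by
  induction w generalizing C with
  | nil =>
    obtain rfl : C' = C := h
    exact hC
  | cons t w ih =>
    obtain ⟨-, D, hD, hw⟩ := h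
    refine ih hw (fun u hu => htrap u (List.mem_cons_of_mem t hu)) ?_
    by_cases hpre : ∃ q ∈ R, q ∈ pre t
    · obtain ⟨q, hq, hqt⟩ := htrap t List.mem_cons_self hpre
      exact ⟨q, hq, hD.mem_of_mem_post hqt⟩
    · obtain ⟨q, hq, hqC⟩ := hC
      exact ⟨q, hq, hD.mem_of_mem_of_notMem_pre hqC fun hqt => hpre ⟨q, hq, hqt⟩⟩

lemma SeqStep.notMem_post_of_trap (h : SeqStep T w C C')
    (htrap : ∀ u ∈ w, (∃ q ∈ R, q ∈ pre u) → ∃ q ∈ R, q ∈ post u)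
    (hC' : ∀ q ∈ R, q ∉ C') : ∀ u ∈ w, ∀ q ∈ R, q ∉ post u := by
  induction w generalizing C with
  | nil => simp
  | cons t w ih =>
    obtain ⟨-, D, hD, hw⟩ := h
    have htrap' := fun u hu => htrap u (List.mem_cons_of_mem t hu)
    refine List.forall_mem_cons.mpr ⟨fun q hq hqt => ?_, ih hw htrap'⟩
    obtain ⟨q', hq', hq'C'⟩ := hw.exists_mem_of_trap htrap' ⟨q, hq, hD.mem_of_mem_post hqt⟩
    exact hC' q' hq' hq'C'

lemma SeqStep.notMem_pre_of_siphon (h : SeqStep T w C C')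
    (hsiphon : ∀ u ∈ w, (∃ q ∈ R, q ∈ post u) → ∃ q ∈ R, q ∈ pre u)
    (hC : ∀ q ∈ R, q ∉ C) : ∀ u ∈ w, ∀ q ∈ R, q ∉ pre u := by
  induction w generalizing C with
  | nil => simp
  | cons t w ih =>
    obtain ⟨-, D, hD, hw⟩ := h
    have hpre : ∀ q ∈ R, q ∉ pre t := fun q hq hqt => hC q hq (Multiset.mem_of_le hD.1 hqt)
    have hpost : ∀ q ∈ R, q ∉ post t := fun q hq hqt => by
      obtain ⟨q', hq', hq't⟩ := hsiphon t List.mem_cons_self ⟨q, hq, hqt⟩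
      exact hpre q' hq' hq't
    have hD : ∀ q ∈ R, q ∉ D := fun q hq hqD =>
      (hD.mem_or_mem_post hqD).elim (hC q hq) (hpost q hq)
    exact List.forall_mem_cons.mpr
      ⟨hpre, ih hw (fun u hu => hsiphon u (List.mem_cons_of_mem t hu)) hD⟩

lemma IsTrap.exists_mem_post {U : Finset (PTrans Q)} {t : PTrans Q} (hR : IsTrap T U R)
    (htT : t ∈ T) (htU : t ∈ U) (hpre : ∃ q ∈ R, q ∈ pre t) : ∃ q ∈ R, q ∈ post t :=
  (Finset.mem_filter.mp <| hR <| Finset.mem_inter.mpr ⟨Finset.mem_filter.mpr ⟨htT, hpre⟩, htU⟩).2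

lemma IsSiphon.exists_mem_pre {U : Finset (PTrans Q)} {t : PTrans Q} (hR : IsSiphon T U R)
    (htT : t ∈ T) (htU : t ∈ U) (hpost : ∃ q ∈ R, q ∈ post t) : ∃ q ∈ R, q ∈ pre t :=
  (Finset.mem_filter.mp <| hR <| Finset.mem_inter.mpr ⟨Finset.mem_filter.mpr ⟨htT, hpost⟩, htU⟩).2

theorem Reach.exists_potReach (h : Reach T C C') : ∃ x, PotReach T C C' x := by
  obtain ⟨w, hw⟩ := h.exists_seqStep
  have hsupp : ∀ u, u ∈ suppIn T (fun t => w.count t) ↔ u ∈ w := fun u => by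
    simp only [suppIn, Finset.mem_filter, ne_eq, List.count_eq_zero, not_not]
    exact ⟨And.right, fun hu => ⟨hw.mem u hu, hu⟩⟩
  refine ⟨fun t => w.count t, hw.flowEq, fun R hR hC' => ?_, fun R hR hC => ?_⟩
  · refine Finset.eq_empty_of_forall_notMem fun u hu => ?_
    simp only [Finset.mem_inter, preSetOf, Finset.mem_filter, hsupp] at hu
    obtain ⟨⟨-, q, hq, hqu⟩, huw⟩ := hu
    refine hw.notMem_post_of_trap (fun v hv => ?_) hC' u huw q hq hqu
    exact hR.exists_mem_post (hw.mem v hv) ((hsupp v).mpr hv)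
  · refine Finset.eq_empty_of_forall_notMem fun u hu => ?_
    simp only [Finset.mem_inter, postSetOf, Finset.mem_filter, hsupp] at hu
    obtain ⟨⟨-, q, hq, hqu⟩, huw⟩ := hu
    refine hw.notMem_pre_of_siphon (fun v hv => ?_) hC u huw q hq hqu
    exact hR.exists_mem_pre (hw.mem v hv) ((hsupp v).mpr hv)

end PotentialReachability

end PopProt

open PopProt in
theorem layeredTermination_strongConsensus_implies_silent_wellSpecified_general
    {Q A : Type*} [Fintype Q] [DecidableEq Q] [Fintype A]
    (P : Protocol Q A) (h1 : LayeredTermination P) (h2 : StrongConsensus P) :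
    IsSilentProtocol P ∧ WellSpecified P := by
  have hterm := h1.termination
  refine ⟨fun e he hf => ?_, fun X hX => ?_⟩
  · obtain ⟨n, -, hn⟩ := hf.exists_terminal_forever hterm he.1 he.2
    exact ⟨n, hn⟩
  · obtain ⟨b, hb⟩ := h2 X hX
    refine ⟨b, fun e he0 hstep hf => ?_⟩
    have hcard : 2 ≤ Multiset.card (e 0) := by rwa [he0, init, Multiset.card_map]
    obtain ⟨n, hterminal, hn⟩ := hf.exists_terminal_forever hterm hcard hstep
    obtain ⟨x, hx⟩ := (he0 ▸ reach_of_steps hstep n).exists_potReach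
    exact ⟨n, fun i hi => hn i hi ▸ hb (e n) x hx hterminal⟩

open PopProt in
/-- Theorem: every protocol satisfying LayeredTermination and StrongConsensus
is silent and well-specified. -/
theorem layeredTermination_strongConsensus_implies_silent_wellSpecified
    {Q A : Type*} [Fintype Q] [DecidableEq Q] [Nonempty Q] [Fintype A] [Nonempty A]
    (P : Protocol Q A) (h1 : LayeredTermination P) (h2 : StrongConsensus P) :
    IsSilentProtocol P ∧ WellSpecified P :=
  layeredTermination_strongConsensus_implies_silent_wellSpecified_general P h1 h2
end

section
/- The threshold protocol P_thr satisfies StrongConsensus. -/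
namespace PopProt

section Threshold

variable (k : ℕ) (a : Fin k → ℤ) (c : ℤ)

/-- `vmax = max(|a₁|, …, |a_k|, |c| + 1)`. -/
def vmax : ℤ := max ((Finset.univ.sup fun i : Fin k => (a i).natAbs : ℕ) : ℤ) (|c| + 1)

lemma vmax_pos : 0 < vmax k a c := by
  have h : (0 : ℤ) ≤ |c| := abs_nonneg c
  exact lt_max_of_lt_right (by omega)

/-- The value range `[-vmax, vmax]`. -/
abbrev Vr := ↥(Finset.Icc (-(vmax k a c)) (vmax k a c))

/-- States of the threshold protocol: a leader bit, a value and an opinion. -/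
abbrev Qthr := Bool × Vr k a c × Bool

/-- `f(m, n) = max(-vmax, min(vmax, m + n))`. -/
def fthr (m n : ℤ) : ℤ := max (-(vmax k a c)) (min (vmax k a c) (m + n))

/-- `g(m, n) = (m + n) - f(m, n)`. -/
def gthr (m n : ℤ) : ℤ := m + n - fthr k a c m n

/-- `b(m, n) = (f(m, n) < c)`. -/
def bthr (m n : ℤ) : Bool := decide (fthr k a c m n < c)

lemma fthr_mem (m n : ℤ) : fthr k a c m n ∈ Finset.Icc (-(vmax k a c)) (vmax k a c) := by
  have h := vmax_pos k a c
  simp only [Finset.mem_Icc, fthr]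
  exact ⟨le_max_left _ _, max_le (by omega) (min_le_left _ _)⟩

lemma gthr_mem (m n : ℤ) (hm : m ∈ Finset.Icc (-(vmax k a c)) (vmax k a c))
    (hn : n ∈ Finset.Icc (-(vmax k a c)) (vmax k a c)) :
    gthr k a c m n ∈ Finset.Icc (-(vmax k a c)) (vmax k a c) := by
  have h := vmax_pos k a c
  simp only [Finset.mem_Icc] at hm hn ⊢
  simp only [gthr, fthr]
  rw [max_def, min_def]
  split_ifs <;> omega

/-- `f` on the value range. -/
def fV (m n : Vr k a c) : Vr k a c := ⟨fthr k a c m n, fthr_mem k a c m n⟩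

/-- `g` on the value range. -/
def gV (m n : Vr k a c) : Vr k a c := ⟨gthr k a c m n, gthr_mem k a c m n m.2 n.2⟩

instance : DecidableEq (Vr k a c) := by unfold Vr; infer_instance

noncomputable instance : Fintype (Vr k a c) := by unfold Vr; infer_instance

instance : DecidableEq (Qthr k a c) := by infer_instance

noncomputable instance : Fintype (Qthr k a c) := by infer_instance

/-- Non-silent transitions of the threshold protocol:
`(1, n, o), (l, n', o') ↦ (1, f(n, n'), b(n, n')), (0, g(n, n'), b(n, n'))`. -/
def IsThrTrans (t : PTrans (Qthr k a c)) : Prop :=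
  ∃ (n n' : Vr k a c) (l o o' : Bool),
    t = ((true, n, o), (l, n', o'),
         (true, fV k a c n n', bthr k a c (n : ℤ) (n' : ℤ)),
         (false, gV k a c n n', bthr k a c (n : ℤ) (n' : ℤ)))

noncomputable instance : DecidablePred (IsThrTrans k a c) := fun t => by
  unfold IsThrTrans; infer_instance

/-- Transition set of the threshold protocol. -/
noncomputable def Tthr : Finset (PTrans (Qthr k a c)) :=
  Finset.univ.filter fun t => IsThrTrans k a c t ∨ IsSilentPair t

lemma a_mem (i : Fin k) : a i ∈ Finset.Icc (-(vmax k a c)) (vmax k a c) := by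
  have h1 : (a i).natAbs ≤ Finset.univ.sup fun j : Fin k => (a j).natAbs :=
    Finset.le_sup (f := fun j : Fin k => (a j).natAbs) (Finset.mem_univ i)
  have h2 : ((Finset.univ.sup fun j : Fin k => (a j).natAbs : ℕ) : ℤ) ≤ vmax k a c :=
    le_max_left _ _
  simp only [Finset.mem_Icc]
  omega

/-- The threshold protocol `P_thr` computing `a₁x₁ + ⋯ + a_kx_k < c`. -/
noncomputable def Pthr : Protocol (Qthr k a c) (Fin k) where
  T := Tthr k a c
  total := fun p q => ⟨p, q, by
    simp only [Tthr, Finset.mem_filter, Finset.mem_univ, true_and]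
    exact Or.inr ⟨p, q, rfl⟩⟩
  inp := fun i => (true, ⟨a i, a_mem k a c i⟩, decide (a i < c))
  out := fun q => q.2.2

/-- `val(C) = Σ_q C(q) · val(q)` where `val(ℓ, n, o) = n`. -/
def valC (C : Multiset (Qthr k a c)) : ℤ := (C.map fun q => ((q.2.1 : ℤ))).sum

/-- `C` contains a leader. -/
def hasLeader (C : Multiset (Qthr k a c)) : Prop := ∃ q ∈ C, q.1 = true

/-- The value `0` of the value range. -/
def zeroV : Vr k a c :=
  ⟨0, by have := vmax_pos k a c; simp only [Finset.mem_Icc]; omega⟩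

/-- `L₀ = {(1, x, 0) : c ≤ x ≤ vmax}`. -/
noncomputable def L0set : Finset (Qthr k a c) :=
  Finset.univ.filter fun q =>
    q.1 = true ∧ q.2.2 = false ∧ c ≤ (q.2.1 : ℤ) ∧ (q.2.1 : ℤ) ≤ vmax k a c

/-- `L₁ = {(1, x, 1) : -vmax ≤ x < c}`. -/
noncomputable def L1set : Finset (Qthr k a c) :=
  Finset.univ.filter fun q =>
    q.1 = true ∧ q.2.2 = true ∧ -(vmax k a c) ≤ (q.2.1 : ℤ) ∧ (q.2.1 : ℤ) < c

/-- `N₀ = {(0, 0, 0)}`. -/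
def N0set : Finset (Qthr k a c) := {(false, zeroV k a c, false)}

/-- `N₁ = {(0, 0, 1)}`. -/
def N1set : Finset (Qthr k a c) := {(false, zeroV k a c, true)}

/-- `T₁ = {t ∈ T : pre t ≠ ⟦q, r⟧ for all q ∈ L₀, r ∈ N₁}`. -/
noncomputable def T1thr : Finset (PTrans (Qthr k a c)) :=
  (Tthr k a c).filter fun t => ∀ q ∈ L0set k a c, ∀ r ∈ N1set k a c, pre t ≠ {q, r}

/-- `T₂ = T ∖ T₁`. -/
noncomputable def T2thr : Finset (PTrans (Qthr k a c)) := Tthr k a c \ T1thr k a c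

/-- `S₁ = {t ∈ T : pre t ≠ ⟦q, r⟧ for all q ∈ L₁, r ∈ N₀}`. -/
noncomputable def S1thr : Finset (PTrans (Qthr k a c)) :=
  (Tthr k a c).filter fun t => ∀ q ∈ L1set k a c, ∀ r ∈ N0set k a c, pre t ≠ {q, r}

/-- `S₂ = T ∖ S₁`. -/
noncomputable def S2thr : Finset (PTrans (Qthr k a c)) := Tthr k a c \ S1thr k a c

end Threshold

end PopProt

/-! The total value `Σ n` of a configuration is preserved by every transition, hence by the flow
equations. Every non-silent transition outputs a leader, so the set of leader states is a trap
and a potentially reachable configuration still contains a leader. In a terminal configuration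
the leader `(1, n, o)` interacts silently with every other agent `(ℓ, m, o')`, i.e.
`f(n, m) = n` and `o = o' = b(n, m) = (n < c)`. Since `|c| < vmax`, this means the others'
values are all `≥ 0` (if `n = vmax`), all `≤ 0` (if `n = -vmax`) or all `0`, and in each case
`n < c` iff the total value is `< c`. -/

namespace Multiset

theorem pair_eq_pair_iff {α : Type*} {a b c d : α} :
    ({a, b} : Multiset α) = {c, d} ↔ a = c ∧ b = d ∨ a = d ∧ b = c := by
  constructor
  · intro h
    have ha : a ∈ ({c, d} : Multiset α) := h ▸ by simp
    simp only [insert_eq_cons, mem_cons, mem_singleton] at ha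
    rcases ha with rfl | rfl
    · exact Or.inl ⟨rfl, singleton_inj.mp ((cons_inj_right a).mp h)⟩
    · rw [pair_comm c a] at h
      exact Or.inr ⟨rfl, singleton_inj.mp ((cons_inj_right a).mp h)⟩
  · rintro (⟨rfl, rfl⟩ | ⟨rfl, rfl⟩)
    · rfl
    · exact pair_comm a b

variable {α : Type*} [DecidableEq α]

theorem pair_le_of_mem_erase {p q : α} {s : Multiset α} (hp : p ∈ s) (hq : q ∈ s.erase p) :
    ({p, q} : Multiset α) ≤ s := by
  rw [← cons_erase hp, insert_eq_cons, cons_le_cons_iff, singleton_le]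
  exact hq

theorem sum_map_eq_sum_univ_count [Fintype α] (s : Multiset α) (w : α → ℤ) :
    (s.map w).sum = ∑ q, (s.count q : ℤ) * w q := by
  rw [Finset.sum_multiset_map_count, ← Finset.sum_subset (Finset.subset_univ s.toFinset)]
  · simp only [nsmul_eq_mul]
  · intro q _ hq
    rw [count_eq_zero.mpr (by simpa using hq), Nat.cast_zero, zero_mul]

end Multiset

namespace PopProt

section General

variable {Q : Type*} [DecidableEq Q] {T : Finset (PTrans Q)} {C C' : Multiset Q}
  {x : PTrans Q → ℕ}

theorem FlowEq.sum_map_eq [Fintype Q] (h : FlowEq T C C' x) (w : Q → ℤ)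
    (hw : ∀ t ∈ T, ((post t).map w).sum = ((pre t).map w).sum) :
    (C'.map w).sum = (C.map w).sum := by
  have hzero : ∀ t ∈ T,
      ∑ q, (x t : ℤ) * (((post t).count q : ℤ) - (pre t).count q) * w q = 0 := by
    intro t ht
    have hwt := hw t ht
    rw [Multiset.sum_map_eq_sum_univ_count, Multiset.sum_map_eq_sum_univ_count] at hwt
    simp_rw [mul_assoc, ← Finset.mul_sum, sub_mul, Finset.sum_sub_distrib, hwt, sub_self,
      mul_zero]
  simp only [Multiset.sum_map_eq_sum_univ_count, h _, add_mul, Finset.sum_add_distrib,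
    Finset.sum_mul]
  rw [Finset.sum_comm, Finset.sum_eq_zero hzero, add_zero]

theorem FlowEq.card_eq [Fintype Q] (h : FlowEq T C C' x) : Multiset.card C' = Multiset.card C := by
  have := h.sum_map_eq (fun _ => 1) fun t _ => by simp [pre, post]
  simpa using this

theorem FlowEq.eq_of_forall_silentT (h : FlowEq T C C' x) (hs : ∀ t ∈ suppIn T x, SilentT t) :
    C' = C := by
  ext q
  have hzero : ∀ t ∈ T, (x t : ℤ) * (((post t).count q : ℤ) - (pre t).count q) = 0 := by
    intro t ht
    by_cases hx : x t = 0
    · simp [hx]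
    · rw [hs t (Finset.mem_filter.mpr ⟨ht, hx⟩), sub_self, mul_zero]
  have hq := h q
  rw [Finset.sum_eq_zero hzero, add_zero] at hq
  exact_mod_cast hq

theorem isTrap_of_forall_not_silentT {R : Finset Q}
    (hR : ∀ t ∈ T, ¬SilentT t → ∃ q ∈ R, q ∈ post t) (U : Finset (PTrans Q)) :
    IsTrap T U R := by
  intro t ht
  obtain ⟨htT, q, hqR, hq⟩ := Finset.mem_filter.mp (Finset.mem_inter.mp ht).1
  refine Finset.mem_filter.mpr ⟨htT, ?_⟩
  by_cases hs : SilentT t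
  · exact ⟨q, hqR, hs ▸ hq⟩
  · exact hR t htT hs

theorem PotReach.exists_mem_of_forall_not_silentT {R : Finset Q} (h : PotReach T C C' x)
    (hR : ∀ t ∈ T, ¬SilentT t → ∃ q ∈ R, q ∈ post t) (hC : ∃ q ∈ R, q ∈ C) :
    ∃ q ∈ R, q ∈ C' := by
  by_contra! hC'
  have hempty := h.2.1 R (isTrap_of_forall_not_silentT hR _) hC'
  have hsilent : ∀ t ∈ suppIn T x, SilentT t := by
    intro t ht
    by_contra hs
    have htT := (Finset.mem_filter.mp ht).1
    have hmem : t ∈ preSetOf T R ∩ suppIn T x :=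
      Finset.mem_inter.mpr ⟨Finset.mem_filter.mpr ⟨htT, hR t htT hs⟩, ht⟩
    simp [hempty] at hmem
  obtain ⟨q, hqR, hqC⟩ := hC
  exact hC' q hqR (h.1.eq_of_forall_silentT hsilent ▸ hqC)

end General

section Threshold

variable (k : ℕ) (a : Fin k → ℤ) (c : ℤ)

theorem exists_leader_mem_post {t : PTrans (Qthr k a c)} (ht : t ∈ Tthr k a c)
    (hs : ¬SilentT t) :
    ∃ q ∈ Finset.univ.filter (fun q : Qthr k a c => q.1 = true), q ∈ post t := by
  rcases (Finset.mem_filter.mp ht).2 with ⟨n, n', l, o, o', rfl⟩ | ⟨p, q, rfl⟩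
  · exact ⟨(true, fV k a c n n', bthr k a c n n'), by simp, by simp [post]⟩
  · exact absurd rfl hs

theorem valC_eq_of_flowEq {C C' : Multiset (Qthr k a c)} {x : PTrans (Qthr k a c) → ℕ}
    (h : FlowEq (Tthr k a c) C C' x) : valC k a c C' = valC k a c C := by
  refine h.sum_map_eq _ fun t ht => ?_
  rcases (Finset.mem_filter.mp ht).2 with ⟨n, n', l, o, o', rfl⟩ | ⟨p, q, rfl⟩
  · simp [pre, post, fV, gV, gthr]
  · rfl

theorem lt_iff_add_sum_lt_of_fthr_eq {n : ℤ} (hn : n ∈ Finset.Icc (-(vmax k a c)) (vmax k a c))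
    {D : Multiset ℤ} (hD : ∀ m ∈ D, fthr k a c n m = n) : n < c ↔ n + D.sum < c := by
  have hcV : |c| < vmax k a c := Int.lt_of_add_one_le (le_max_right _ _)
  have hc := abs_lt.mp hcV
  rw [Finset.mem_Icc] at hn
  simp only [fthr] at hD
  by_cases hmax : n = vmax k a c
  · have hD' : 0 ≤ D.sum := Multiset.sum_nonneg fun m hm => by have := hD m hm; omega
    omega
  by_cases hmin : n = -vmax k a c
  · have hD' : D.sum ≤ 0 := by
      simpa using Multiset.sum_le_card_nsmul D 0 fun m hm => by have := hD m hm; omega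
    omega
  have hD' : D.sum = 0 := Multiset.sum_eq_zero fun m hm => by have := hD m hm; omega
  omega

theorem fthr_eq_and_opinions_eq_of_terminal {C : Multiset (Qthr k a c)}
    (hterm : Terminal (Tthr k a c) C) {n : Vr k a c} {o : Bool} (hp : (true, n, o) ∈ C)
    {q : Qthr k a c} (hq : q ∈ C.erase (true, n, o)) :
    fthr k a c n q.2.1 = n ∧ o = decide ((n : ℤ) < c) ∧ q.2.2 = decide ((n : ℤ) < c) := by
  obtain ⟨l, m, o'⟩ := q
  have ht : ((true, n, o), (l, m, o'), (true, fV k a c n m, bthr k a c n m),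
      (false, gV k a c n m, bthr k a c n m)) ∈ Tthr k a c :=
    Finset.mem_filter.mpr ⟨Finset.mem_univ _, Or.inl ⟨n, m, l, o, o', rfl⟩⟩
  have hsilent := hterm _ ht (Multiset.pair_le_of_mem_erase hp hq)
  rcases Multiset.pair_eq_pair_iff.mp hsilent with ⟨hleader, hother⟩ | ⟨hleader, -⟩
  · simp only [Prod.mk.injEq] at hleader hother
    have hf : fthr k a c n m = n := congrArg Subtype.val hleader.2.1.symm
    simp only [bthr, hf] at hleader hother
    exact ⟨hf, hleader.2.2, hother.2.2⟩
  · simp at hleader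

theorem consensus_of_terminal {C : Multiset (Qthr k a c)} (hterm : Terminal (Tthr k a c) C)
    (hcard : 2 ≤ Multiset.card C) (hlead : hasLeader k a c C) :
    Consensus (Pthr k a c).out C (decide (valC k a c C < c)) := by
  obtain ⟨⟨l, n, o⟩, hp, hl⟩ := hlead
  obtain rfl : l = true := hl
  have hrest := fun q (hq : q ∈ C.erase (true, n, o)) =>
    fthr_eq_and_opinions_eq_of_terminal k a c hterm hp hq
  have hval : valC k a c C = n + ((C.erase (true, n, o)).map fun q => (q.2.1 : ℤ)).sum :=
    (Multiset.sum_map_erase hp).symm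
  have hdec : decide (valC k a c C < c) = decide ((n : ℤ) < c) := by
    rw [hval, decide_eq_decide]
    refine (lt_iff_add_sum_lt_of_fthr_eq k a c n.2 fun m hm => ?_).symm
    obtain ⟨q, hq, rfl⟩ := Multiset.mem_map.mp hm
    exact (hrest q hq).1
  intro q hq
  rw [hdec]
  by_cases hqp : q = (true, n, o)
  · obtain ⟨q', hq'⟩ : ∃ q', q' ∈ C.erase (true, n, o) := by
      rw [← Multiset.card_pos_iff_exists_mem, Multiset.card_erase_of_mem hp,
        Nat.pred_eq_sub_one]
      omega
    rw [hqp]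
    exact (hrest q' hq').2.1
  · exact (hrest q ((Multiset.mem_erase_of_ne hqp).mpr hq)).2.2

end Threshold

end PopProt

open PopProt in
theorem threshold_strongConsensus_general
    (k : ℕ) (a : Fin k → ℤ) (c : ℤ) :
    StrongConsensus (Pthr k a c) := by
  intro X hX
  refine ⟨decide (valC k a c (init (Pthr k a c) X) < c), fun C' x hpr hterm => ?_⟩
  have hcard : 2 ≤ Multiset.card C' := by
    rwa [hpr.1.card_eq, init, Multiset.card_map]
  have hlead : hasLeader k a c C' := by
    obtain ⟨i, hi⟩ := Multiset.card_pos_iff_exists_mem.mp (by omega : 0 < Multiset.card X)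
    obtain ⟨q, hq, hqC⟩ := hpr.exists_mem_of_forall_not_silentT
      (fun _ => exists_leader_mem_post k a c)
      ⟨_, by simp [Pthr], Multiset.mem_map_of_mem _ hi⟩
    exact ⟨q, hqC, (Finset.mem_filter.mp hq).2⟩
  rw [← valC_eq_of_flowEq k a c hpr.1]
  exact consensus_of_terminal k a c hterm hcard hlead

open PopProt in
/-- Proposition: the threshold protocol `P_thr` satisfies StrongConsensus. -/
theorem threshold_strongConsensus
    (k : ℕ) (a : Fin k → ℤ) (c : ℤ) (hk : 1 ≤ k) :
    StrongConsensus (Pthr k a c) :=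
  threshold_strongConsensus_general k a c
end
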